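/- arXiv:1411.4717 — 3 statements merged into one kernel-verified Lean document; each statement's English description precedes it below -/
import Mathlib

section
/- For the symmetrized viscous coefficient matrices ĉ₁ⱼ of the compressible Navier–Stokes equations, the wall contraction satisfies -wᵀ(ĉ₁₁ ∂w/∂x₁ + ĉ₁₂ ∂w/∂x₂ + ĉ₁₃ ∂w/∂x₃) = κ (∂T/∂x₁)(1/T) when the no-slip conditions u₁ = u₂ = u₃ = 0 hold at the wall. -/
open Matrix

/-- Symmetrized viscous coefficient matrix `ĉ₁₁`. -/
noncomputable def c11hat (T μ κ u1 u2 u3 : ℝ) : Matrix (Fin 5) (Fin 5) ℝ :=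
  !![0, 0, 0, 0, 0;
     0, 4/3 * T * μ, 0, 0, 4/3 * T * μ * u1;
     0, 0, T * μ, 0, T * μ * u2;
     0, 0, 0, T * μ, T * μ * u3;
     0, 4/3 * T * μ * u1, T * μ * u2, T * μ * u3,
       T ^ 2 * κ + 1/3 * T * (4 * μ * u1 ^ 2 + 3 * μ * u2 ^ 2 + 3 * μ * u3 ^ 2)]

/-- Symmetrized viscous coefficient matrix `ĉ₂₂`. -/
noncomputable def c22hat (T μ κ u1 u2 u3 : ℝ) : Matrix (Fin 5) (Fin 5) ℝ :=
  !![0, 0, 0, 0, 0;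
     0, T * μ, 0, 0, T * μ * u1;
     0, 0, 4/3 * T * μ, 0, 4/3 * T * μ * u2;
     0, 0, 0, T * μ, T * μ * u3;
     0, T * μ * u1, 4/3 * T * μ * u2, T * μ * u3,
       T ^ 2 * κ + 1/3 * T * (3 * μ * u1 ^ 2 + 4 * μ * u2 ^ 2 + 3 * μ * u3 ^ 2)]

/-- Symmetrized viscous coefficient matrix `ĉ₃₃`. -/
noncomputable def c33hat (T μ κ u1 u2 u3 : ℝ) : Matrix (Fin 5) (Fin 5) ℝ :=
  !![0, 0, 0, 0, 0;
     0, T * μ, 0, 0, T * μ * u1;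
     0, 0, T * μ, 0, T * μ * u2;
     0, 0, 0, 4/3 * T * μ, 4/3 * T * μ * u3;
     0, T * μ * u1, T * μ * u2, 4/3 * T * μ * u3,
       T ^ 2 * κ + 1/3 * T * (3 * μ * u1 ^ 2 + 3 * μ * u2 ^ 2 + 4 * μ * u3 ^ 2)]

/-- Symmetrized viscous coefficient matrix `ĉ₁₂`. -/
noncomputable def c12hat (T μ u1 u2 u3 : ℝ) : Matrix (Fin 5) (Fin 5) ℝ :=
  !![0, 0, 0, 0, 0;
     0, 0, -(2/3) * T * μ, 0, -(2/3) * T * μ * u2;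
     0, T * μ, 0, 0, T * μ * u1;
     0, 0, 0, 0, 0;
     0, T * μ * u2, -(2/3) * T * μ * u1, 0, 1/3 * T * μ * u1 * u2]

/-- Symmetrized viscous coefficient matrix `ĉ₁₃`. -/
noncomputable def c13hat (T μ u1 u2 u3 : ℝ) : Matrix (Fin 5) (Fin 5) ℝ :=
  !![0, 0, 0, 0, 0;
     0, 0, 0, -(2/3) * T * μ, -(2/3) * T * μ * u3;
     0, 0, 0, 0, 0;
     0, T * μ, 0, 0, T * μ * u1;
     0, T * μ * u3, 0, -(2/3) * T * μ * u1, 1/3 * T * μ * u1 * u3]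

/-- Symmetrized viscous coefficient matrix `ĉ₂₃`. -/
noncomputable def c23hat (T μ u1 u2 u3 : ℝ) : Matrix (Fin 5) (Fin 5) ℝ :=
  !![0, 0, 0, 0, 0;
     0, 0, 0, 0, 0;
     0, 0, 0, -(2/3) * T * μ, -(2/3) * T * μ * u3;
     0, 0, T * μ, 0, T * μ * u2;
     0, 0, T * μ * u3, -(2/3) * T * μ * u2, 1/3 * T * μ * u2 * u3]

/-!
At a no-slip wall the entropy variables reduce to `w = (g, 0, 0, 0, -1/T)`. The first row of
every `ĉ₁ⱼ` vanishes, and with `u = 0` so does the last row of `ĉ₁₂` and `ĉ₁₃`, while the last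
row of `ĉ₁₁` keeps only its heat-conduction entry `T²κ`. Hence `wᵀ ĉ₁₁ = -Tκ e₅` and
`wᵀ ĉ₁₂ = wᵀ ĉ₁₃ = 0`, and the contraction is `Tκ · (∂w/∂x₁)₅ = Tκ · (∂T/∂x₁)/T²`.
-/

section NoSlip

variable (T μ κ g b : ℝ)

theorem vecMul_c11hat_of_noslip :
    ![g, 0, 0, 0, b] ᵥ* c11hat T μ κ 0 0 0 = Pi.single 4 (b * (T ^ 2 * κ)) := by
  ext i
  fin_cases i <;> simp [vecMul, dotProduct, Fin.sum_univ_five, c11hat]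

theorem vecMul_c12hat_of_noslip (u3 : ℝ) :
    ![g, 0, 0, 0, b] ᵥ* c12hat T μ 0 0 u3 = 0 := by
  ext i
  fin_cases i <;> simp [vecMul, dotProduct, Fin.sum_univ_five, c12hat]

theorem vecMul_c13hat_of_noslip (u2 : ℝ) :
    ![g, 0, 0, 0, b] ᵥ* c13hat T μ 0 u2 0 = 0 := by
  ext i
  fin_cases i <;> simp [vecMul, dotProduct, Fin.sum_univ_five, c13hat]

end NoSlip

/-- `θⱼ` stands for `∂w/∂xⱼ` and `Tx` for `∂T/∂x₁`; as `w(5) = -1/T`, the fifth component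
(index `4`) of `θ1` is `Tx / T ^ 2`. -/
theorem viscous_wall_contraction_noslip
    (T μ κ u1 u2 u3 Tx s h : ℝ) (hT : 0 < T)
    (hu1 : u1 = 0) (hu2 : u2 = 0) (hu3 : u3 = 0)
    (w θ1 θ2 θ3 : Fin 5 → ℝ)
    (hw : w = ![h / T - s - (u1 ^ 2 + u2 ^ 2 + u3 ^ 2) / (2 * T),
      u1 / T, u2 / T, u3 / T, -1 / T])
    (hθ1 : θ1 4 = Tx / T ^ 2) :
    -(w ⬝ᵥ ((c11hat T μ κ u1 u2 u3) *ᵥ θ1 + (c12hat T μ u1 u2 u3) *ᵥ θ2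
        + (c13hat T μ u1 u2 u3) *ᵥ θ3)) = κ * Tx * (1 / T) := by
  subst hu1 hu2 hu3
  replace hw : w = ![h / T - s, 0, 0, 0, -1 / T] := by simpa using hw
  rw [hw, dotProduct_add, dotProduct_add, dotProduct_mulVec, dotProduct_mulVec,
    dotProduct_mulVec, vecMul_c11hat_of_noslip, vecMul_c12hat_of_noslip,
    vecMul_c13hat_of_noslip, single_dotProduct, zero_dotProduct, zero_dotProduct, add_zero,
    add_zero, hθ1]
  field_simp
end

section
/- The 15×15 block matrix with 5×5 blocks ĉᵢⱼ (i,j = 1,2,3) of symmetrized viscous coefficients for the compressible Navier–Stokes equations is symmetric positive semi-definite whenever T > 0, μ ≥ 0, κ ≥ 0. -/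
/-! The quadratic form of the block matrix is a sum of squares. Writing `x (i, ·)` for the
`i`-th block of five components and `g i k = x (i, k + 1) + uₖ x (i, 4)` (the analogue of the
velocity gradient `∂ᵢ vₖ`), it equals `T μ Φ(g) + T² κ ∑ᵢ x (i, 4)²`, where
`Φ(g) = 2 ‖sym g - (tr g / 3) I‖²` is the viscous dissipation under Stokes' hypothesis.
Symmetry holds blockwise: the diagonal blocks `ĉᵢᵢ` are symmetric and `ĉⱼᵢ = ĉᵢⱼᵀ`. -/

open Matrix

/-- The 15×15 block matrix of the symmetrized viscous coefficient matrices `ĉᵢⱼ`,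
with `ĉ₂₁ = ĉ₁₂ᵀ`, `ĉ₃₁ = ĉ₁₃ᵀ`, `ĉ₃₂ = ĉ₂₃ᵀ`. -/
noncomputable def viscousBlock (T μ κ u1 u2 u3 : ℝ) :
    Matrix (Fin 3 × Fin 5) (Fin 3 × Fin 5) ℝ :=
  Matrix.of fun p q =>
    (![![c11hat T μ κ u1 u2 u3, c12hat T μ u1 u2 u3, c13hat T μ u1 u2 u3],
       ![(c12hat T μ u1 u2 u3).transpose, c22hat T μ κ u1 u2 u3, c23hat T μ u1 u2 u3],
       ![(c13hat T μ u1 u2 u3).transpose, (c23hat T μ u1 u2 u3).transpose,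
         c33hat T μ κ u1 u2 u3]] p.1 q.1) p.2 q.2

theorem Matrix.isSymm_comp {I K R : Type*} {M : Matrix I I (Matrix K K R)}
    (h : ∀ i j, (M j i)ᵀ = M i j) : (comp I I K K R M).IsSymm := by
  rw [IsSymm, transpose_comp]
  congr 1
  ext1 i j
  exact h i j

noncomputable def viscousDissipation (g : Matrix (Fin 3) (Fin 3) ℝ) : ℝ :=
  2/3 * ((g 0 0 - g 1 1) ^ 2 + (g 0 0 - g 2 2) ^ 2 + (g 1 1 - g 2 2) ^ 2)
    + (g 0 1 + g 1 0) ^ 2 + (g 0 2 + g 2 0) ^ 2 + (g 1 2 + g 2 1) ^ 2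

theorem viscousDissipation_nonneg (g : Matrix (Fin 3) (Fin 3) ℝ) : 0 ≤ viscousDissipation g := by
  unfold viscousDissipation
  positivity

section

variable (T μ κ u1 u2 u3 : ℝ)

theorem c11hat_transpose : (c11hat T μ κ u1 u2 u3)ᵀ = c11hat T μ κ u1 u2 u3 := by
  ext a b; fin_cases a <;> fin_cases b <;> rfl

theorem c22hat_transpose : (c22hat T μ κ u1 u2 u3)ᵀ = c22hat T μ κ u1 u2 u3 := by
  ext a b; fin_cases a <;> fin_cases b <;> rfl

theorem c33hat_transpose : (c33hat T μ κ u1 u2 u3)ᵀ = c33hat T μ κ u1 u2 u3 := by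
  ext a b; fin_cases a <;> fin_cases b <;> rfl

theorem viscousBlock_isSymm : (viscousBlock T μ κ u1 u2 u3).IsSymm := by
  refine isSymm_comp fun i j => ?_
  fin_cases i <;> fin_cases j <;> simp [c11hat_transpose, c22hat_transpose, c33hat_transpose]

def velocityGradient (x : Fin 3 × Fin 5 → ℝ) : Matrix (Fin 3) (Fin 3) ℝ :=
  of fun i => ![x (i, 1) + u1 * x (i, 4), x (i, 2) + u2 * x (i, 4), x (i, 3) + u3 * x (i, 4)]

theorem dotProduct_viscousBlock_mulVec (x : Fin 3 × Fin 5 → ℝ) :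
    x ⬝ᵥ viscousBlock T μ κ u1 u2 u3 *ᵥ x =
      T * μ * viscousDissipation (velocityGradient u1 u2 u3 x) + T ^ 2 * κ * ∑ i, x (i, 4) ^ 2 := by
  simp only [dotProduct, mulVec, Fintype.sum_prod_type, Fin.sum_univ_three, Fin.sum_univ_five,
    viscousBlock, of_apply, cons_val_zero, cons_val_one, cons_val_two, cons_val_three,
    cons_val_four, vecTail, vecHead, transpose_apply, c11hat, c22hat, c33hat, c12hat, c13hat,
    c23hat, Function.comp_apply, Fin.succ_zero_eq_one, Fin.succ_one_eq_two, cons_val_succ,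
    cons_val_fin_one, viscousDissipation, velocityGradient]
  ring

end

/-- the 15×15 block matrix of the symmetrized viscous coefficient
matrices is symmetric positive semi-definite whenever `T > 0`, `μ ≥ 0`, `κ ≥ 0`,
for arbitrary velocities `u₁, u₂, u₃`. -/
theorem viscousBlock_posSemidef
    (T μ κ u1 u2 u3 : ℝ) (hT : 0 < T) (hμ : 0 ≤ μ) (hκ : 0 ≤ κ) :
    (viscousBlock T μ κ u1 u2 u3).IsSymm ∧ (viscousBlock T μ κ u1 u2 u3).PosSemidef := by
  have hsymm := viscousBlock_isSymm T μ κ u1 u2 u3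
  refine ⟨hsymm, .of_dotProduct_mulVec_nonneg (isHermitian_iff_isSymm.mpr hsymm) fun x => ?_⟩
  rw [star_trivial, dotProduct_viscousBlock_mulVec]
  have := viscousDissipation_nonneg (velocityGradient u1 u2 u3 x)
  positivity
end

section
/- The viscous boundary-flux penalty is mimetic: with the manufactured gradient Θ̃_{x₁} equal to the numerical gradient except that its fifth component is replaced by Θ̃_{x₁}(5) = -g(t)·w₍₁₎(5) = g(t)/T₍₁₎, and under no-slip (u₁ = u₂ = u₃ = 0) at the boundary node, the contraction -w₍₁₎ᵀ f̄₁^{(V,B)} = -w₍₁₎ᵀ(ĉ₁₁ Θ̃_{x₁} + ĉ₁₂ Θ_{x₂,(1)} + ĉ₁₃ Θ_{x₃,(1)}) equals κ g(t). -/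
open Matrix

/-!
There is no viscous flux in the mass equation (the first row of every `ĉᵢⱼ` vanishes), and
under no-slip the velocity entries of `w₍₁₎` vanish, so the contraction only sees the energy
component `-1/T` of `w₍₁₎`. At zero velocity the energy row of `ĉ₁₂` and `ĉ₁₃` vanishes and
that of `ĉ₁₁` reduces to the heat-flux entry `T²κ`, so the contraction is
`(1/T) · T²κ · g/T = κ g`.
-/

lemma vec5_dotProduct_eq_of_apply_zero_eq_zero {a b : ℝ} {F : Fin 5 → ℝ} (hF : F 0 = 0) :
    ![a, 0, 0, 0, b] ⬝ᵥ F = b * F 4 := by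
  simp [dotProduct, Fin.sum_univ_five, hF]

lemma c11hat_mulVec_apply_zero (T μ κ u1 u2 u3 : ℝ) (v : Fin 5 → ℝ) :
    (c11hat T μ κ u1 u2 u3 *ᵥ v) 0 = 0 := by
  simp [c11hat, mulVec, dotProduct, Fin.sum_univ_five]

lemma c12hat_mulVec_apply_zero (T μ u1 u2 u3 : ℝ) (v : Fin 5 → ℝ) :
    (c12hat T μ u1 u2 u3 *ᵥ v) 0 = 0 := by
  simp [c12hat, mulVec, dotProduct, Fin.sum_univ_five]

lemma c13hat_mulVec_apply_zero (T μ u1 u2 u3 : ℝ) (v : Fin 5 → ℝ) :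
    (c13hat T μ u1 u2 u3 *ᵥ v) 0 = 0 := by
  simp [c13hat, mulVec, dotProduct, Fin.sum_univ_five]

lemma c11hat_zero_velocity_mulVec_apply_four (T μ κ : ℝ) (v : Fin 5 → ℝ) :
    (c11hat T μ κ 0 0 0 *ᵥ v) 4 = T ^ 2 * κ * v 4 := by
  simp [c11hat, mulVec, dotProduct, Fin.sum_univ_five]

lemma c12hat_zero_velocity_mulVec_apply_four (T μ : ℝ) (v : Fin 5 → ℝ) :
    (c12hat T μ 0 0 0 *ᵥ v) 4 = 0 := by
  simp [c12hat, mulVec, dotProduct, Fin.sum_univ_five]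

lemma c13hat_zero_velocity_mulVec_apply_four (T μ : ℝ) (v : Fin 5 → ℝ) :
    (c13hat T μ 0 0 0 *ᵥ v) 4 = 0 := by
  simp [c13hat, mulVec, dotProduct, Fin.sum_univ_five]

/-- the viscous boundary-flux penalty is mimetic. With the manufactured
gradient `Θ̃_{x₁}` whose fifth component is `Θ̃_{x₁}(5) = -g(t)·w₍₁₎(5) = g(t)/T₍₁₎`,
and under no-slip (`u₁ = u₂ = u₃ = 0`) at the boundary node, the contraction
`-w₍₁₎ᵀ(ĉ₁₁ Θ̃_{x₁} + ĉ₁₂ Θ_{x₂,(1)} + ĉ₁₃ Θ_{x₃,(1)})` equals `κ g(t)`. -/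
theorem viscous_boundary_flux_mimetic
    (T μ κ u1 u2 u3 g s h : ℝ) (hT : 0 < T)
    (hu1 : u1 = 0) (hu2 : u2 = 0) (hu3 : u3 = 0)
    (w θt θ2 θ3 : Fin 5 → ℝ)
    (hw : w = ![h / T - s - (u1 ^ 2 + u2 ^ 2 + u3 ^ 2) / (2 * T),
      u1 / T, u2 / T, u3 / T, -1 / T])
    (hθt : θt 4 = -g * (-1 / T)) :
    -(w ⬝ᵥ ((c11hat T μ κ u1 u2 u3) *ᵥ θt + (c12hat T μ u1 u2 u3) *ᵥ θ2
        + (c13hat T μ u1 u2 u3) *ᵥ θ3)) = κ * g := by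
  subst hu1 hu2 hu3 hw
  set F := c11hat T μ κ 0 0 0 *ᵥ θt + c12hat T μ 0 0 0 *ᵥ θ2 + c13hat T μ 0 0 0 *ᵥ θ3
  have hF0 : F 0 = 0 := by
    simp only [F, Pi.add_apply, c11hat_mulVec_apply_zero, c12hat_mulVec_apply_zero,
      c13hat_mulVec_apply_zero, add_zero]
  have hF4 : F 4 = T ^ 2 * κ * θt 4 := by
    simp only [F, Pi.add_apply, c11hat_zero_velocity_mulVec_apply_four,
      c12hat_zero_velocity_mulVec_apply_four, c13hat_zero_velocity_mulVec_apply_four, add_zero]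
  simp only [zero_div, zero_pow two_ne_zero, add_zero, sub_zero]
  rw [vec5_dotProduct_eq_of_apply_zero_eq_zero hF0, hF4, hθt]
  field_simp
end
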